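/- Let λ, μ ∈ 𝒫^l_n, let 0 ≤ j ≤ n and let s, t ∈ Std(μ). If s is λ-column-dominated on 1,…,j and s ⊵ t (that is, w_s ≥ w_t in the Bruhat order), then t is λ-column-dominated on 1,…,j. In particular, if s ∈ Std_λ(μ) and s ⊵ t, then t ∈ Std_λ(μ). -/

import Mathlib

namespace FS

open scoped Classical

/-- A node `(r, c, m)`: row `r`, column `c`, component `m` (all 1-based). -/
abbrev Node := ℕ × ℕ × ℕ

/-- Membership of a node in the Young diagram of the multipartition `p`,
where `p m r` is the `r`-th part of the `m`-th component. -/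
def InDiag (p : ℕ → ℕ → ℕ) (A : Node) : Prop :=
  1 ≤ A.2.1 ∧ A.2.1 ≤ p A.2.2 A.1

/-- `p` is an `l`-multipartition of `n` (components indexed `1,…,l`, rows indexed `1,…`). -/
def IsMP (l n : ℕ) (p : ℕ → ℕ → ℕ) : Prop :=
  (∀ m r, (m = 0 ∨ l < m ∨ r = 0 ∨ n < r) → p m r = 0) ∧
  (∀ m r, 1 ≤ r → p m (r + 1) ≤ p m r) ∧
  (∑ m ∈ Finset.Icc 1 l, ∑ r ∈ Finset.Icc 1 n, p m r) = n

/-- Total size of an `l`-multicomposition (rows bounded by `n`). -/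
def mpSize (l n : ℕ) (p : ℕ → ℕ → ℕ) : ℕ :=
  ∑ m ∈ Finset.Icc 1 l, ∑ r ∈ Finset.Icc 1 n, p m r

/-- Size of the `m`-th component. -/
def compSize (n : ℕ) (p : ℕ → ℕ → ℕ) (m : ℕ) : ℕ :=
  ∑ r ∈ Finset.Icc 1 n, p m r

/-- Length of column `c` of component `m`, i.e. `(p^(m))'_c`. -/
def colLen (n : ℕ) (p : ℕ → ℕ → ℕ) (m c : ℕ) : ℕ :=
  ((Finset.Icc 1 n).filter fun r => c ≤ p m r).card

/-- Dominance order on `l`-multicompositions: `Dom l N p q` means `p ⊵ q`. -/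
def Dom (l N : ℕ) (p q : ℕ → ℕ → ℕ) : Prop :=
  ∀ m r, 1 ≤ m → m ≤ l →
    (∑ m' ∈ Finset.Icc 1 (m - 1), compSize N q m') + ∑ r' ∈ Finset.Icc 1 r, q m r' ≤
      (∑ m' ∈ Finset.Icc 1 (m - 1), compSize N p m') + ∑ r' ∈ Finset.Icc 1 r, p m r'

/-- `t` is a `p`-tableau: a bijection from the diagram of `p` onto `{1,…,n}`. -/
def IsTab (n : ℕ) (p : ℕ → ℕ → ℕ) (t : Node → ℕ) : Prop :=
  (∀ A, InDiag p A → 1 ≤ t A ∧ t A ≤ n) ∧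
  (∀ A B, InDiag p A → InDiag p B → t A = t B → A = B) ∧
  (∀ i, 1 ≤ i → i ≤ n → ∃ A, InDiag p A ∧ t A = i)

/-- Entries increase from left to right along each row. -/
def RowStrict (p : ℕ → ℕ → ℕ) (t : Node → ℕ) : Prop :=
  ∀ r c m, InDiag p (r, c, m) → InDiag p (r, c + 1, m) → t (r, c, m) < t (r, c + 1, m)

/-- Entries increase down each column. -/
def ColStrict (p : ℕ → ℕ → ℕ) (t : Node → ℕ) : Prop :=
  ∀ r c m, InDiag p (r, c, m) → InDiag p (r + 1, c, m) → t (r, c, m) < t (r + 1, c, m)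

/-- A standard tableau is both row-strict and column-strict. -/
def IsStd (p : ℕ → ℕ → ℕ) (t : Node → ℕ) : Prop := RowStrict p t ∧ ColStrict p t

/-- The tableau `t_λ`, obtained by writing `1,…,n` in order down successive columns
from left to right (components from `l` down to `1`). -/
def colTab (l n : ℕ) (p : ℕ → ℕ → ℕ) : Node → ℕ := fun A =>
  (∑ m' ∈ Finset.Icc (A.2.2 + 1) l, compSize n p m') +
    (∑ c' ∈ Finset.Icc 1 (A.2.1 - 1), colLen n p A.2.2 c') + A.1

/-- The tableau `t^λ`, obtained by writing `1,…,n` in order along successive rows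
from top to bottom (components from `1` up to `l`). -/
def rowTab (n : ℕ) (p : ℕ → ℕ → ℕ) : Node → ℕ := fun A =>
  (∑ m' ∈ Finset.Icc 1 (A.2.2 - 1), compSize n p m') +
    (∑ r' ∈ Finset.Icc 1 (A.1 - 1), p A.2.2 r') + A.2.1

/-- The Coxeter generator `s_i = (i, i+1)` of the symmetric group. -/
def sw (i : ℕ) : Equiv.Perm ℕ := Equiv.swap i (i + 1)

/-- The product `s_{i_1} ⋯ s_{i_k}` corresponding to a word `L = [i_1,…,i_k]`. -/
def wordProd (L : List ℕ) : Equiv.Perm ℕ := (L.map sw).prod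

/-- `L` is an expression for `w` in the Coxeter generators `s_1,…,s_{n-1}` of `S_n`. -/
def IsWord (n : ℕ) (L : List ℕ) (w : Equiv.Perm ℕ) : Prop :=
  (∀ i ∈ L, 1 ≤ i ∧ i + 1 ≤ n) ∧ wordProd L = w

/-- The Coxeter length of `w ∈ S_n`. -/
noncomputable def len (n : ℕ) (w : Equiv.Perm ℕ) : ℕ :=
  sInf {k | ∃ L, IsWord n L w ∧ L.length = k}

/-- `L` is a reduced expression for `w ∈ S_n`. -/
def IsReduced (n : ℕ) (L : List ℕ) (w : Equiv.Perm ℕ) : Prop :=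
  IsWord n L w ∧ L.length = len n w

/-- The Bruhat order on `S_n`: `x ≤ w` iff some reduced expression for `w` has an
expression for `x` as a subsequence. -/
def BruhatLE (n : ℕ) (x w : Equiv.Perm ℕ) : Prop :=
  ∃ L, IsReduced n L w ∧ ∃ L', L'.Sublist L ∧ wordProd L' = x

/-- Strict Bruhat order. -/
def BruhatLT (n : ℕ) (x w : Equiv.Perm ℕ) : Prop := BruhatLE n x w ∧ x ≠ w

/-- The left (weak) order on `S_n`: `x ≤_L w` iff `ℓ(w) = ℓ(w x⁻¹) + ℓ(x)`. -/
def LeftLE (n : ℕ) (x w : Equiv.Perm ℕ) : Prop :=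
  len n w = len n (w * x⁻¹) + len n x

/-- `w` is a permutation of `{1,…,n}` (fixing everything else). -/
def PermOf (n : ℕ) (w : Equiv.Perm ℕ) : Prop := ∀ i, i = 0 ∨ n < i → w i = i

/-- `w` is the permutation sending the base tableau `base` to the tableau `t`
(e.g. `w = w_t` when `base = t_λ`). -/
def IsPermOfTab (n : ℕ) (p : ℕ → ℕ → ℕ) (base t : Node → ℕ) (w : Equiv.Perm ℕ) : Prop :=
  PermOf n w ∧ ∀ A, InDiag p A → w (base A) = t A

/-- `Shape(t↓j)`: the multicomposition whose `(m, r)` entry is the number of nodes in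
row `r` of component `m` whose entry under `t` is at most `j`. -/
def shape (n : ℕ) (p : ℕ → ℕ → ℕ) (t : Node → ℕ) (j : ℕ) : ℕ → ℕ → ℕ :=
  fun m r => ((Finset.Icc 1 n).filter fun c => c ≤ p m r ∧ t (r, c, m) ≤ j).card

/-- `Shape(t↓j)'`: the conjugate multicomposition, whose `(m, c)` entry is the number of
nodes in column `c` of component `l + 1 - m` whose entry under `t` is at most `j`. -/
def shapeConj (l n : ℕ) (p : ℕ → ℕ → ℕ) (t : Node → ℕ) (j : ℕ) : ℕ → ℕ → ℕ :=
  fun m c => ((Finset.Icc 1 n).filter fun r => c ≤ p (l + 1 - m) r ∧ t (r, c, l + 1 - m) ≤ j).card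

/-- `A` lies weakly to the left of `B`. -/
def WeaklyLeft (A B : Node) : Prop :=
  B.2.2 < A.2.2 ∨ (A.2.2 = B.2.2 ∧ A.2.1 ≤ B.2.1)

/-- `A` lies weakly above `B`. -/
def WeaklyAbove (A B : Node) : Prop :=
  A.2.2 < B.2.2 ∨ (A.2.2 = B.2.2 ∧ A.1 ≤ B.1)

/-- `A` lies weakly to the right of `B`. -/
def WeaklyRight (A B : Node) : Prop :=
  A.2.2 < B.2.2 ∨ (A.2.2 = B.2.2 ∧ B.2.1 ≤ A.2.1)

/-- `t` (a `mu`-tableau) is `lam`-column-dominated on `1,…,j`: each `i ≤ j` appears in `t`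
at least as far to the left as it does in `t_lam`. -/
def ColDomOn (l n : ℕ) (lam mu : ℕ → ℕ → ℕ) (t : Node → ℕ) (j : ℕ) : Prop :=
  ∀ i A B, 1 ≤ i → i ≤ j → InDiag mu A → t A = i → InDiag lam B →
    colTab l n lam B = i → WeaklyLeft A B

/-- `t` is weakly `lam`-column-dominated on `1,…,j`: each `i ≤ j` appears in `t` in a
component at least as far to the left as it does in `t_lam`. -/
def WColDomOn (l n : ℕ) (lam mu : ℕ → ℕ → ℕ) (t : Node → ℕ) (j : ℕ) : Prop :=
  ∀ i A B, 1 ≤ i → i ≤ j → InDiag mu A → t A = i → InDiag lam B →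
    colTab l n lam B = i → B.2.2 ≤ A.2.2

/-- `t` (a `mu`-tableau) is `lam`-row-dominated on `1,…,j`: each `i ≤ j` appears in `t`
at least as high as it does in `t^lam`. -/
def RowDomOn (n : ℕ) (lam mu : ℕ → ℕ → ℕ) (t : Node → ℕ) (j : ℕ) : Prop :=
  ∀ i A B, 1 ≤ i → i ≤ j → InDiag mu A → t A = i → InDiag lam B →
    rowTab n lam B = i → WeaklyAbove A B

/-- The multipartition `λ_L(c, m)`: the first `c` columns of component `m`, followed by
components `m+1,…,l`. -/
def leftPart (lam : ℕ → ℕ → ℕ) (c m : ℕ) : ℕ → ℕ → ℕ := fun k r =>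
  if k = 0 then 0 else if k = 1 then min (lam m r) c else lam (m + k - 1) r

/-- The multipartition `λ_R(c, m)`: components `1,…,m-1`, followed by the part of
component `m` after its first `c` columns. -/
def rightPart (lam : ℕ → ℕ → ℕ) (c m : ℕ) : ℕ → ℕ → ℕ := fun k r =>
  if k < m then lam k r else if k = m then lam m r - c else 0

/-- The multipartition `λ_T(r₀, m)`: components `1,…,m-1`, followed by the first `r₀`
rows of component `m`. -/
def topPart (lam : ℕ → ℕ → ℕ) (r₀ m : ℕ) : ℕ → ℕ → ℕ := fun k r =>
  if k < m then lam k r else if k = m then (if r ≤ r₀ then lam m r else 0) else 0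

/-- The multipartition `λ_B(r₀, m)`: the rows of component `m` after row `r₀`, followed
by components `m+1,…,l`. -/
def botPart (lam : ℕ → ℕ → ℕ) (r₀ m : ℕ) : ℕ → ℕ → ℕ := fun k r =>
  if k = 0 ∨ r = 0 then 0 else if k = 1 then lam m (r₀ + r) else lam (m + k - 1) r

/-- The glued tableau `t_L # t_R`: places `1,…,n_L` on the left part as in `t_L`, and
places `n_L + t_R(A)` at the node corresponding to each node `A` of the right part. -/
def glueLR (nL c m : ℕ) (tL tR : Node → ℕ) : Node → ℕ := fun A =>
  if A.2.2 < m then nL + tR A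
  else if A.2.2 = m then
    (if A.2.1 ≤ c then tL (A.1, A.2.1, 1) else nL + tR (A.1, A.2.1 - c, m))
  else tL (A.1, A.2.1, A.2.2 - m + 1)

/-- The tableau `t⁺` obtained from a tableau `t` of `μ_R(1,m)` by increasing all entries
by `k`, adjoining a first column with entries `1,…,k` to component `m`, and adjoining
empty components `m+1,…,l`. -/
def addFirstCol (k m : ℕ) (t : Node → ℕ) : Node → ℕ := fun A =>
  if A.2.2 = m then (if A.2.1 = 1 then A.1 else k + t (A.1, A.2.1 - 1, m))
  else k + t A

/-- The tableau `t⁺` obtained from a tableau `t` of `μ_L(d-1,m)` by adjoining empty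
components `1,…,m-1` and adjoining a column `d` to component `m` with entries
`nk+1,…,nk+k` from top to bottom. -/
def addLastCol (nk m d : ℕ) (t : Node → ℕ) : Node → ℕ := fun A =>
  if A.2.2 = m then (if A.2.1 = d then nk + A.1 else t (A.1, A.2.1, 1))
  else t (A.1, A.2.1, A.2.2 - m + 1)

/-- The `i`-th smallest element of a finite set of naturals (1-based). -/
def nthElt (S : Finset ℕ) (i : ℕ) : ℕ := (S.sort (· ≤ ·)).getD (i - 1) 0

/-- The set `S_B` of entries of `t_λ` lying in the bottom region (component `> m`, or
component `m` in a row `> r₀`). -/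
noncomputable def SB (l n : ℕ) (lam : ℕ → ℕ → ℕ) (r₀ m : ℕ) : Finset ℕ :=
  (Finset.Icc 1 n).filter fun i =>
    ∃ A, InDiag lam A ∧ colTab l n lam A = i ∧ (m < A.2.2 ∨ (A.2.2 = m ∧ r₀ < A.1))

/-- The glued tableau `t #̄ s`: on the bottom region the entries are `lab_B ∘ t` and on
the top region they are `lab_T ∘ s`, where `lab_B`, `lab_T` are the order-preserving
bijections onto `S_B`, `S_T`. -/
def glueBT (S_B S_T : Finset ℕ) (r₀ m : ℕ) (tB tT : Node → ℕ) : Node → ℕ := fun A =>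
  if A.2.2 < m then nthElt S_T (tT A)
  else if A.2.2 = m then
    (if A.1 ≤ r₀ then nthElt S_T (tT A) else nthElt S_B (tB (A.1 - r₀, A.2.1, 1)))
  else nthElt S_B (tB (A.1, A.2.1, A.2.2 - m + 1))

/-- The residue of a node `(r, c, m)` with respect to the multicharge `κ`:
`κ_m + c - r` in `ℤ/eℤ` (with `ZMod 0 = ℤ` encoding `e = ∞`). -/
def resNode (e : ℕ) (κ : ℕ → ZMod e) (A : Node) : ZMod e :=
  κ A.2.2 + (A.2.1 : ZMod e) - (A.1 : ZMod e)

/-! Write `r_w(p, q)` for the number of values `k < q` with `w⁻¹ k ≤ p`. Going down in the Bruhat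
order can only increase each `r_w(p, q)`: removing the first letter `s_i` of a reduced word for `w`
changes only `r(p, i + 1)`, and in a controlled way, since the rest of the word does not invert
`i, i + 1`.
As `t_μ` numbers the nodes column by column, "the entries `1, …, i` of `s` lie weakly left of
column `c` of component `m`" says `r_{w_s}(K, i + 1) = i + 1`, where `K` is the number of nodes
of `μ` weakly left of that column; so the same holds for `t`. Column dominance of `s` puts
`1, …, i` weakly left of the column of `t_λ⁻¹(i)`, and hence so does `t`. -/

@[simp] lemma wordProd_cons (i : ℕ) (L : List ℕ) : wordProd (i :: L) = sw i * wordProd L := by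
  simp [wordProd]

lemma sw_mul_self (i : ℕ) : sw i * sw i = 1 := Equiv.swap_mul_self i (i + 1)

lemma symm_sw_mul_apply (i : ℕ) (v : Equiv.Perm ℕ) (x : ℕ) :
    (sw i * v).symm x = v.symm (sw i x) := by
  simp [sw, Equiv.Perm.mul_def]

lemma sw_lt_sw {i a b : ℕ} (hab : a < b) (hne : ¬(a = i ∧ b = i + 1)) : sw i a < sw i b := by
  simp only [sw, Equiv.swap_apply_def]
  split_ifs <;> omega

/-- The strong exchange property of `S_n`. -/
lemma exists_sublist_wordProd_eq_swap_mul (M : List ℕ) {a b : ℕ} (hab : a < b)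
    (hinv : (wordProd M).symm b < (wordProd M).symm a) :
    ∃ M', M'.Sublist M ∧ M'.length + 1 = M.length ∧
      wordProd M' = Equiv.swap a b * wordProd M := by
  induction M generalizing a b with
  | nil =>
    change b < a at hinv
    omega
  | cons j M ih =>
    by_cases hj : a = j ∧ b = j + 1
    · obtain ⟨rfl, rfl⟩ := hj
      refine ⟨M, List.sublist_cons_self a M, rfl, ?_⟩
      rw [wordProd_cons, ← mul_assoc, ← sw, sw_mul_self, one_mul]
    · rw [wordProd_cons, symm_sw_mul_apply, symm_sw_mul_apply] at hinv
      obtain ⟨M', hsub, hlen, hprod⟩ := ih (sw_lt_sw hab hj) hinv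
      refine ⟨j :: M', hsub.cons_cons j, by simp [← hlen], ?_⟩
      have hconj : Equiv.swap (sw j a) (sw j b) = sw j * Equiv.swap a b * (sw j)⁻¹ :=
        Equiv.swap_apply_apply (sw j) a b
      rw [wordProd_cons, wordProd_cons, hprod, hconj, show (sw j)⁻¹ = sw j from Equiv.swap_inv _ _]
      calc sw j * (sw j * Equiv.swap a b * sw j * wordProd M)
          = (sw j * sw j) * Equiv.swap a b * sw j * wordProd M := by group
        _ = Equiv.swap a b * (sw j * wordProd M) := by rw [sw_mul_self]; group

lemma len_le_length {n : ℕ} {L : List ℕ} {w : Equiv.Perm ℕ} (h : IsWord n L w) :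
    len n w ≤ L.length :=
  Nat.sInf_le ⟨L, h, rfl⟩

lemma exists_isReduced {n : ℕ} {L : List ℕ} {w : Equiv.Perm ℕ} (h : IsWord n L w) :
    ∃ L', IsReduced n L' w :=
  Nat.sInf_mem (s := {k | ∃ L, IsWord n L w ∧ L.length = k}) ⟨L.length, L, h, rfl⟩

namespace IsReduced

variable {n i : ℕ} {M : List ℕ} {w : Equiv.Perm ℕ}

lemma tail (h : IsReduced n (i :: M) w) : IsReduced n M (wordProd M) := by
  obtain ⟨⟨hletters, hprod⟩, hlen⟩ := h
  have hM : IsWord n M (wordProd M) := ⟨fun a ha => hletters a (by simp [ha]), rfl⟩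
  refine ⟨hM, le_antisymm ?_ (len_le_length hM)⟩
  by_contra! hshort
  obtain ⟨M', ⟨hM'letters, hM'prod⟩, hM'len⟩ := exists_isReduced hM
  have hword : IsWord n (i :: M') w := by
    refine ⟨fun a ha => ?_, by rw [wordProd_cons, hM'prod, ← hprod, wordProd_cons]⟩
    rcases List.mem_cons.mp ha with rfl | ha
    exacts [hletters a (by simp), hM'letters a ha]
  have := len_le_length hword
  simp only [List.length_cons] at this hlen
  omega

lemma symm_lt (h : IsReduced n (i :: M) w) :
    (wordProd M).symm i < (wordProd M).symm (i + 1) := by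
  obtain ⟨⟨hletters, hprod⟩, hlen⟩ := h
  rcases lt_trichotomy ((wordProd M).symm i) ((wordProd M).symm (i + 1)) with hlt | heq | hgt
  · exact hlt
  · exact absurd ((wordProd M).symm.injective heq) (by omega)
  · obtain ⟨M', hsub, hM'len, hM'prod⟩ := exists_sublist_wordProd_eq_swap_mul M (by omega) hgt
    have hword : IsWord n M' w :=
      ⟨fun a ha => hletters a (List.mem_cons_of_mem i (hsub.subset ha)),
        by rw [hM'prod, ← hprod, wordProd_cons, sw]⟩
    have := len_le_length hword
    simp only [List.length_cons] at hlen
    omega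

end IsReduced

def rankCount (w : Equiv.Perm ℕ) (p q : ℕ) : ℕ :=
  ((Finset.range q).filter fun k => w.symm k ≤ p).card

section rankCount

variable {v y : Equiv.Perm ℕ} {i : ℕ}

lemma rankCount_succ (w : Equiv.Perm ℕ) (p q : ℕ) :
    rankCount w p (q + 1) = rankCount w p q + if w.symm q ≤ p then 1 else 0 := by
  simp only [rankCount, Finset.card_filter, Finset.sum_range_succ]

lemma rankCount_sw_mul_of_ne {p q : ℕ} (hq : q ≠ i + 1) :
    rankCount (sw i * v) p q = rankCount v p q := by
  simp only [rankCount, Finset.card_filter, symm_sw_mul_apply]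
  rcases le_or_gt q i with hqi | hiq
  · refine Finset.sum_congr rfl fun k hk => ?_
    rw [Finset.mem_range] at hk
    rw [sw, Equiv.swap_apply_of_ne_of_ne (by omega) (by omega)]
  · refine Equiv.Perm.sum_comp (sw i) _ (fun k => if v.symm k ≤ p then 1 else 0) fun k hk => ?_
    simp only [sw, Set.mem_ofPred_eq, Equiv.swap_apply_def] at hk
    simp only [Finset.coe_range, Set.mem_Iio]
    split_ifs at hk <;> omega

lemma rankCount_sw_mul_self_succ (p : ℕ) :
    rankCount (sw i * v) p (i + 1) = rankCount v p i + if v.symm (i + 1) ≤ p then 1 else 0 := by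
  rw [rankCount_succ, rankCount_sw_mul_of_ne (by omega), symm_sw_mul_apply, sw,
    Equiv.swap_apply_left]

lemma rankCount_sw_mul_le (hv : v.symm i < v.symm (i + 1)) (p q : ℕ) :
    rankCount (sw i * v) p q ≤ rankCount v p q := by
  by_cases hq : q = i + 1
  · subst hq
    rw [rankCount_sw_mul_self_succ, rankCount_succ]
    split_ifs <;> omega
  · rw [rankCount_sw_mul_of_ne hq]

lemma rankCount_sw_mul_le_sw_mul (hv : v.symm i < v.symm (i + 1))
    (hvy : ∀ p q, rankCount v p q ≤ rankCount y p q) (p q : ℕ) :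
    rankCount (sw i * v) p q ≤ rankCount (sw i * y) p q := by
  by_cases hq : q = i + 1
  · subst hq
    have hi := hvy p i
    have hi2 := hvy p (i + 1 + 1)
    rw [rankCount_sw_mul_self_succ, rankCount_sw_mul_self_succ]
    simp only [rankCount_succ] at hi2
    -- `hv`: if the value `i + 1` of `v` sits at a position `≤ p`, so does the value `i`.
    split_ifs at hi2 ⊢ <;> omega
  · rw [rankCount_sw_mul_of_ne hq, rankCount_sw_mul_of_ne hq]
    exact hvy p q

lemma rankCount_le_of_sublist {n : ℕ} {L : List ℕ} {w : Equiv.Perm ℕ} (hred : IsReduced n L w)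
    {L' : List ℕ} (hsub : L'.Sublist L) (p q : ℕ) :
    rankCount w p q ≤ rankCount (wordProd L') p q := by
  induction L generalizing w L' p q with
  | nil =>
    rw [List.sublist_nil.mp hsub, ← hred.1.2]
  | cons i M ih =>
    rw [← hred.1.2, wordProd_cons]
    rcases List.sublist_cons_iff.mp hsub with hsubM | ⟨M', rfl, hsubM⟩
    · exact (rankCount_sw_mul_le hred.symm_lt p q).trans (ih hred.tail hsubM p q)
    · rw [wordProd_cons]
      exact rankCount_sw_mul_le_sw_mul hred.symm_lt (ih hred.tail hsubM) p q

end rankCount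

lemma BruhatLE.symm_le {n : ℕ} {x w : Equiv.Perm ℕ} (h : BruhatLE n x w) {p q : ℕ}
    (hw : ∀ k < q, w.symm k ≤ p) : ∀ k < q, x.symm k ≤ p := by
  obtain ⟨L, hred, L', hsub, rfl⟩ := h
  have hfull : rankCount w p q = q :=
    (Finset.card_filter_eq_iff.mpr fun k hk => hw k (Finset.mem_range.mp hk)).trans
      (Finset.card_range q)
  have hcard : rankCount (wordProd L') p q = (Finset.range q).card := by
    refine le_antisymm (Finset.card_filter_le _ _) ?_
    rw [Finset.card_range]
    exact hfull.ge.trans (rankCount_le_of_sublist hred hsub p q)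
  intro k hk
  exact Finset.card_filter_eq_iff.mp hcard k (by simpa using hk)

lemma WeaklyLeft.trans {A B C : Node} (hAB : WeaklyLeft A B) (hBC : WeaklyLeft B C) :
    WeaklyLeft A C := by
  unfold WeaklyLeft at *
  omega

section colTab

variable {l n : ℕ} {p : ℕ → ℕ → ℕ}

def leftCompSize (l n : ℕ) (p : ℕ → ℕ → ℕ) (m : ℕ) : ℕ :=
  ∑ m' ∈ Finset.Icc (m + 1) l, compSize n p m'

/-- The number of nodes weakly to the left of column `c` of component `m`; `t_p` fills them with
`1, …, colPrefix l n p m c`. -/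
def colPrefix (l n : ℕ) (p : ℕ → ℕ → ℕ) (m c : ℕ) : ℕ :=
  leftCompSize l n p m + ∑ c' ∈ Finset.Icc 1 c, colLen n p m c'

lemma colTab_eq_colPrefix (r c m : ℕ) :
    colTab l n p (r, c, m) = colPrefix l n p m (c - 1) + r :=
  rfl

lemma sum_colLen_le_compSize (m c : ℕ) :
    ∑ c' ∈ Finset.Icc 1 c, colLen n p m c' ≤ compSize n p m := by
  simp only [colLen, compSize, Finset.card_filter]
  rw [Finset.sum_comm]
  refine Finset.sum_le_sum fun r _ => ?_
  rw [← Finset.card_filter]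
  calc ((Finset.Icc 1 c).filter fun c' => c' ≤ p m r).card
      ≤ (Finset.Icc 1 (p m r)).card :=
        Finset.card_le_card fun c' hc' => by
          simp only [Finset.mem_filter, Finset.mem_Icc] at hc' ⊢
          omega
    _ = p m r := by simp

lemma leftCompSize_antitone {m₁ m₂ : ℕ} (h : m₁ ≤ m₂) :
    leftCompSize l n p m₂ ≤ leftCompSize l n p m₁ :=
  Finset.sum_le_sum_of_subset (Finset.Icc_subset_Icc_left (by omega))

lemma leftCompSize_succ_add_compSize {m : ℕ} (hm : m + 1 ≤ l) :
    leftCompSize l n p (m + 1) + compSize n p (m + 1) = leftCompSize l n p m := by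
  rw [leftCompSize, leftCompSize, ← Finset.insert_Icc_add_one_left_eq_Icc hm,
    Finset.sum_insert (by simp), add_comm]

lemma colPrefix_succ_le_leftCompSize {m : ℕ} (hm : m + 1 ≤ l) (c : ℕ) :
    colPrefix l n p (m + 1) c ≤ leftCompSize l n p m := by
  rw [colPrefix, ← leftCompSize_succ_add_compSize hm]
  exact Nat.add_le_add_left (sum_colLen_le_compSize _ _) _

lemma colPrefix_mono {m₁ m₂ c₁ c₂ : ℕ} (hm₁ : m₁ ≤ l) (h : m₂ < m₁ ∨ (m₁ = m₂ ∧ c₁ ≤ c₂)) :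
    colPrefix l n p m₁ c₁ ≤ colPrefix l n p m₂ c₂ := by
  rcases h with hlt | ⟨rfl, hc⟩
  · obtain ⟨m, rfl⟩ : ∃ m, m₁ = m + 1 := ⟨m₁ - 1, by omega⟩
    calc colPrefix l n p (m + 1) c₁ ≤ leftCompSize l n p m := colPrefix_succ_le_leftCompSize hm₁ c₁
      _ ≤ leftCompSize l n p m₂ := leftCompSize_antitone (by omega)
      _ ≤ colPrefix l n p m₂ c₂ := Nat.le_add_right _ _
  · exact Nat.add_le_add_left
      (Finset.sum_le_sum_of_subset (Finset.Icc_subset_Icc_right hc)) _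

noncomputable def diagFinset (l n : ℕ) (p : ℕ → ℕ → ℕ) : Finset Node :=
  (Finset.Icc 1 n ×ˢ Finset.Icc 1 n ×ˢ Finset.Icc 1 l).filter (InDiag p)

namespace IsMP

variable (hp : IsMP l n p)
include hp

lemma antitone_part {m r₁ r₂ : ℕ} (hr₁ : 1 ≤ r₁) (h : r₁ ≤ r₂) : p m r₂ ≤ p m r₁ := by
  induction r₂, h using Nat.le_induction with
  | base => exact le_rfl
  | succ r hr ih => exact (hp.2.1 m r (by omega)).trans ih

lemma bounds_of_inDiag {r c m : ℕ} (hA : InDiag p (r, c, m)) :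
    1 ≤ r ∧ r ≤ n ∧ 1 ≤ m ∧ m ≤ l ∧ 1 ≤ c ∧ c ≤ p m r := by
  obtain ⟨hc, hcp⟩ := hA
  by_cases hout : m = 0 ∨ l < m ∨ r = 0 ∨ n < r
  · have := hp.1 m r hout
    simp only at hc hcp
    omega
  · exact ⟨by omega, by omega, by omega, by omega, hc, hcp⟩

lemma part_le {m r : ℕ} : p m r ≤ n := by
  by_cases hout : m = 0 ∨ l < m ∨ r = 0 ∨ n < r
  · simp [hp.1 m r hout]
  · push Not at hout
    calc p m r ≤ compSize n p m :=
          Finset.single_le_sum (f := p m) (fun _ _ => Nat.zero_le _) (by simp; omega)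
      _ ≤ ∑ m' ∈ Finset.Icc 1 l, compSize n p m' :=
          Finset.single_le_sum (f := compSize n p) (fun _ _ => Nat.zero_le _) (by simp; omega)
      _ = n := hp.2.2

lemma le_colLen {r c m : ℕ} (hA : InDiag p (r, c, m)) : r ≤ colLen n p m c := by
  obtain ⟨-, hrn, -, -, -, hc⟩ := hp.bounds_of_inDiag hA
  calc r = (Finset.Icc 1 r).card := by simp
    _ ≤ colLen n p m c := Finset.card_le_card fun r' hr' => by
      simp only [Finset.mem_Icc] at hr'
      simp only [Finset.mem_filter, Finset.mem_Icc]
      exact ⟨⟨hr'.1, by omega⟩, hc.trans (hp.antitone_part hr'.1 hr'.2)⟩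

lemma colTab_le_colPrefix {r c m : ℕ} (hA : InDiag p (r, c, m)) :
    colTab l n p (r, c, m) ≤ colPrefix l n p m c := by
  obtain ⟨-, -, -, -, hc, -⟩ := hp.bounds_of_inDiag hA
  obtain ⟨c, rfl⟩ : ∃ c', c = c' + 1 := ⟨c - 1, by omega⟩
  rw [colTab_eq_colPrefix, colPrefix, colPrefix, Nat.add_sub_cancel,
    Finset.sum_Icc_succ_top (by omega), ← add_assoc]
  exact Nat.add_le_add_left (hp.le_colLen hA) _

lemma colTab_le_colPrefix_iff {r c m r' c' m' : ℕ} (hA : InDiag p (r, c, m)) (hm' : m' ≤ l) :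
    colTab l n p (r, c, m) ≤ colPrefix l n p m' c' ↔ WeaklyLeft (r, c, m) (r', c', m') := by
  obtain ⟨hr, -, -, hml, -, -⟩ := hp.bounds_of_inDiag hA
  unfold WeaklyLeft
  dsimp only
  constructor
  · intro hle
    by_contra! hright
    have := colPrefix_mono (p := p) (n := n) (m₂ := m) (c₁ := c') (c₂ := c - 1) hm' (by omega)
    rw [colTab_eq_colPrefix] at hle
    omega
  · exact fun hleft => (hp.colTab_le_colPrefix hA).trans (colPrefix_mono hml hleft)

lemma colTab_le {r c m : ℕ} (hA : InDiag p (r, c, m)) : colTab l n p (r, c, m) ≤ n := by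
  obtain ⟨-, -, hm, hml, -, -⟩ := hp.bounds_of_inDiag hA
  obtain ⟨m, rfl⟩ : ∃ m', m = m' + 1 := ⟨m - 1, by omega⟩
  calc colTab l n p (r, c, m + 1) ≤ colPrefix l n p (m + 1) c := hp.colTab_le_colPrefix hA
    _ ≤ leftCompSize l n p m := colPrefix_succ_le_leftCompSize hml c
    _ ≤ leftCompSize l n p 0 := leftCompSize_antitone (Nat.zero_le m)
    _ = n := hp.2.2

lemma colTab_injOn {A B : Node} (hA : InDiag p A) (hB : InDiag p B)
    (h : colTab l n p A = colTab l n p B) : A = B := by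
  obtain ⟨rA, cA, mA⟩ := A
  obtain ⟨rB, cB, mB⟩ := B
  have hAB : WeaklyLeft (rA, cA, mA) (rB, cB, mB) :=
    (hp.colTab_le_colPrefix_iff hA (hp.bounds_of_inDiag hB).2.2.2.1).mp
      (h.le.trans (hp.colTab_le_colPrefix hB))
  have hBA : WeaklyLeft (rB, cB, mB) (rA, cA, mA) :=
    (hp.colTab_le_colPrefix_iff hB (hp.bounds_of_inDiag hA).2.2.2.1).mp
      (h.ge.trans (hp.colTab_le_colPrefix hA))
  unfold WeaklyLeft at hAB hBA
  obtain ⟨rfl, rfl⟩ : mA = mB ∧ cA = cB := by dsimp only at hAB hBA; omega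
  rw [colTab_eq_colPrefix, colTab_eq_colPrefix] at h
  rw [Nat.add_left_cancel h]

lemma mem_diagFinset {A : Node} : A ∈ diagFinset l n p ↔ InDiag p A := by
  obtain ⟨r, c, m⟩ := A
  refine ⟨fun h => (Finset.mem_filter.mp h).2, fun hA => ?_⟩
  obtain ⟨hr, hrn, hm, hml, hc, hcp⟩ := hp.bounds_of_inDiag hA
  have := hp.part_le (m := m) (r := r)
  simp only [diagFinset, Finset.mem_filter, Finset.mem_product, Finset.mem_Icc]
  exact ⟨⟨⟨hr, hrn⟩, ⟨hc, by omega⟩, ⟨hm, hml⟩⟩, hA⟩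

lemma card_diagFinset : (diagFinset l n p).card = n := by
  have hrow : ∀ m r, ∑ c ∈ Finset.Icc 1 n, (if InDiag p (r, c, m) then 1 else 0) = p m r := by
    intro m r
    rw [← Finset.card_filter]
    have : (Finset.Icc 1 n).filter (fun c => InDiag p (r, c, m)) = Finset.Icc 1 (p m r) := by
      ext c
      have := hp.part_le (m := m) (r := r)
      rw [Finset.mem_filter]
      simp only [Finset.mem_Icc, InDiag]
      omega
    simp [this]
  calc (diagFinset l n p).card
      = ∑ r ∈ Finset.Icc 1 n, ∑ c ∈ Finset.Icc 1 n, ∑ m ∈ Finset.Icc 1 l,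
          (if InDiag p (r, c, m) then 1 else 0) := by
        simp only [diagFinset, Finset.card_filter, Finset.sum_product]
    _ = ∑ m ∈ Finset.Icc 1 l, ∑ r ∈ Finset.Icc 1 n, ∑ c ∈ Finset.Icc 1 n,
          (if InDiag p (r, c, m) then 1 else 0) :=
        (Finset.sum_congr rfl fun r _ => Finset.sum_comm).trans Finset.sum_comm
    _ = n := by simp only [hrow]; exact hp.2.2

lemma colTab_isTab : IsTab n p (colTab l n p) := by
  have hbounds : ∀ A, InDiag p A → 1 ≤ colTab l n p A ∧ colTab l n p A ≤ n := fun ⟨r, c, m⟩ hA =>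
    ⟨by rw [colTab_eq_colPrefix]; have := (hp.bounds_of_inDiag hA).1; omega, hp.colTab_le hA⟩
  refine ⟨hbounds, fun A B hA hB => hp.colTab_injOn hA hB, fun i hi hin => ?_⟩
  have himage : (diagFinset l n p).image (colTab l n p) = Finset.Icc 1 n := by
    refine Finset.eq_of_subset_of_card_le (fun x hx => ?_) ?_
    · obtain ⟨A, hA, rfl⟩ := Finset.mem_image.mp hx
      exact Finset.mem_Icc.mpr (hbounds A (hp.mem_diagFinset.mp hA))
    · rw [Finset.card_image_of_injOn fun A hA B hB => hp.colTab_injOn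
        (hp.mem_diagFinset.mp hA) (hp.mem_diagFinset.mp hB), hp.card_diagFinset]
      simp
  obtain ⟨A, hA, hAi⟩ := Finset.mem_image.mp (himage ▸ Finset.mem_Icc.mpr ⟨hi, hin⟩)
  exact ⟨A, hp.mem_diagFinset.mp hA, hAi⟩

end IsMP

end colTab

theorem colDom_of_bruhat_le_general (l n : ℕ)
    (lam mu : ℕ → ℕ → ℕ) (hlam : IsMP l n lam) (hmu : IsMP l n mu)
    (j : ℕ) (hj : j ≤ n)
    (s t : Node → ℕ) (hs : IsTab n mu s)
    (ws wt : Equiv.Perm ℕ)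
    (hws : IsPermOfTab n mu (colTab l n mu) s ws)
    (hwt : IsPermOfTab n mu (colTab l n mu) t wt)
    (hdom : ColDomOn l n lam mu s j)
    (hbru : BruhatLE n wt ws) :
    ColDomOn l n lam mu t j := by
  intro i A B hi hij hA htA hB hlamB
  obtain ⟨rB, cB, mB⟩ := B
  have hmB : mB ≤ l := (hlam.bounds_of_inDiag hB).2.2.2.1
  have hs_left : ∀ k < i + 1, ws.symm k ≤ colPrefix l n mu mB cB := by
    intro k hk
    rcases Nat.eq_zero_or_pos k with rfl | hk0
    · rw [ws.symm_apply_eq.mpr (hws.1 0 (Or.inl rfl)).symm]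
      exact Nat.zero_le _
    obtain ⟨A', hA', hsA'⟩ := hs.2.2 k hk0 (by omega)
    obtain ⟨B', hB', hlamB'⟩ := hlam.colTab_isTab.2.2 k hk0 (by omega)
    have hB'B : WeaklyLeft B' (rB, cB, mB) := by
      refine (hlam.colTab_le_colPrefix_iff hB' hmB).mp ?_
      calc colTab l n lam B' = k := hlamB'
        _ ≤ colTab l n lam (rB, cB, mB) := by omega
        _ ≤ colPrefix l n lam mB cB := hlam.colTab_le_colPrefix hB
    have hA'B := (hdom k A' B' hk0 (by omega) hA' hsA' hB' hlamB').trans hB'B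
    rw [← hsA', ← hws.2 A' hA', Equiv.symm_apply_apply]
    exact (hmu.colTab_le_colPrefix_iff hA' hmB).mpr hA'B
  have ht_left := hbru.symm_le hs_left i (Nat.lt_succ_self i)
  rw [← htA, ← hwt.2 A hA, Equiv.symm_apply_apply] at ht_left
  exact (hmu.colTab_le_colPrefix_iff hA hmB).mp ht_left

/-- If a standard `μ`-tableau `s` is `λ`-column-dominated on `1,…,j`
and `s ⊵ t` (i.e. `w_s ≥ w_t` in the Bruhat order), then `t` is `λ`-column-dominated
on `1,…,j`. -/
theorem colDom_of_bruhat_le (l n : ℕ) (hl : 1 ≤ l) (hn : 1 ≤ n)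
    (lam mu : ℕ → ℕ → ℕ) (hlam : IsMP l n lam) (hmu : IsMP l n mu)
    (j : ℕ) (hj : j ≤ n)
    (s t : Node → ℕ) (hs : IsTab n mu s) (ht : IsTab n mu t)
    (hsstd : IsStd mu s) (htstd : IsStd mu t)
    (ws wt : Equiv.Perm ℕ)
    (hws : IsPermOfTab n mu (colTab l n mu) s ws)
    (hwt : IsPermOfTab n mu (colTab l n mu) t wt)
    (hdom : ColDomOn l n lam mu s j)
    (hbru : BruhatLE n wt ws) :
    ColDomOn l n lam mu t j :=
  colDom_of_bruhat_le_general l n lam mu hlam hmu j hj s t hs ws wt hws hwt hdom hbru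

end FS
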